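/- arXiv:1601.00675 — 2 statements merged into one kernel-verified Lean document; each statement's English description precedes it below -/
import Mathlib

section
/- With T_n* as above and assuming A'(1) = 0 (so that T_n*(e_1;x) = x), the second central moment satisfies T_n*((e_1 − x)^2; x) = (b_n/n)(1 + H''(1))x + (b_n/n)^2·(A'(1) + A''(1))/A(1). -/
open Real Filter Topology

/-- The Chlodowsky-type generalized Szász operator built from Sheffer polynomials `p`. -/
noncomputable def szaszSheffer (A H : ℝ → ℝ) (p : ℕ → ℝ → ℝ) (b : ℕ → ℝ)
    (n : ℕ) (f : ℝ → ℝ) (x : ℝ) : ℝ :=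
  (Real.exp (-((n : ℝ) / b n) * x * H 1) / A 1) *
    ∑' k : ℕ, p k (((n : ℝ) / b n) * x) * f (((k : ℝ) / n) * b n)

/-!
Put `u = (n / b n) * x`. The numbers `p k u` are the Taylor coefficients at `0` of
`G t = A t * exp (u * H t)`, so `∑ p k u`, `∑ k * p k u` and `∑ k * (k - 1) * p k u` are
`G 1`, `G' 1` and `G'' 1`. The nodes satisfy `k / n * b n - x = (b n / n) * (k - u)`, hence the
operator equals `(b n / n) ^ 2 * (G'' 1 + (1 - 2 u) G' 1 + u ^ 2 G 1) / G 1`, and differentiating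
`A * exp (u * H)` twice with `H' 1 = 1` gives the formula.
-/

open FormalMultilinearSeries

theorem hasFPowerSeriesOnBall_ofScalars_of_hasSum {c : ℕ → ℝ} {f : ℝ → ℝ} {R : ℝ} (hR : 0 < R)
    (h : ∀ t : ℝ, |t| < R → HasSum (fun k => c k * t ^ k) (f t)) :
    HasFPowerSeriesOnBall f (ofScalars ℝ c) 0 (ENNReal.ofReal R) where
  r_le := by
    refine ENNReal.le_of_forall_nnreal_lt fun r hr => le_radius_of_summable _ ?_
    have hrR : |(r : ℝ)| < R := by
      simpa using ENNReal.toReal_lt_of_lt_ofReal hr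
    -- a summable real series is absolutely summable
    simpa [ofScalars_norm, abs_mul] using (h r hrR).summable.abs
  r_pos := ENNReal.ofReal_pos.mpr hR
  hasSum {t} ht := by
    simpa [ofScalars_apply_eq, mul_comm] using h t (by simpa using ht)

section

variable {𝕜 : Type*} [NontriviallyNormedField 𝕜] {c : ℕ → 𝕜} {f : 𝕜 → 𝕜} {r : ENNReal}

theorem HasFPowerSeriesOnBall.hasSum_ofScalars {t : 𝕜}
    (hf : HasFPowerSeriesOnBall f (ofScalars 𝕜 c) 0 r) (ht : ‖t‖ₑ < r) :
    HasSum (fun k => c k * t ^ k) (f t) := by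
  simpa [ofScalars_apply_eq, mul_comm] using hf.hasSum (y := t) (by simpa using ht)

theorem FormalMultilinearSeries.apply_one_comp_derivSeries_ofScalars [CompleteSpace 𝕜] :
    (ContinuousLinearMap.apply 𝕜 𝕜 (1 : 𝕜)).compFormalMultilinearSeries
      (ofScalars 𝕜 c).derivSeries = ofScalars 𝕜 fun k => (k + 1) * c (k + 1) := by
  ext n : 1
  refine ContinuousMultilinearMap.ext fun v => ?_
  have hcoeff := derivSeries_coeff_one (ofScalars 𝕜 c) n
  rw [coeff_ofScalars] at hcoeff
  simp only [ContinuousLinearMap.compFormalMultilinearSeries_apply,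
    ContinuousLinearMap.compContinuousMultilinearMap_coe, Function.comp_apply,
    (ofScalars 𝕜 c).derivSeries.apply_eq_prod_smul_coeff, map_smul, ContinuousLinearMap.apply_apply,
    hcoeff, nsmul_eq_mul, Nat.cast_add, Nat.cast_one, smul_eq_mul, ofScalars, _root_.smul_apply,
    ContinuousMultilinearMap.mkPiAlgebraFin_apply, List.prod_ofFn]
  ring

theorem HasFPowerSeriesOnBall.deriv_ofScalars [CompleteSpace 𝕜]
    (hf : HasFPowerSeriesOnBall f (ofScalars 𝕜 c) 0 r) :
    HasFPowerSeriesOnBall (deriv f) (ofScalars 𝕜 fun k => (k + 1) * c (k + 1)) 0 r := by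
  rw [← apply_one_comp_derivSeries_ofScalars]
  exact (ContinuousLinearMap.apply 𝕜 𝕜 (1 : 𝕜)).comp_hasFPowerSeriesOnBall hf.fderiv

end

section

variable {c : ℕ → ℝ} {f : ℝ → ℝ} {r : ENNReal}

theorem HasFPowerSeriesOnBall.hasSum_natCast_mul_ofScalars
    (hf : HasFPowerSeriesOnBall f (ofScalars ℝ c) 0 r) (hr : 1 < r) :
    HasSum (fun k : ℕ => k * c k) (deriv f 1) := by
  have h := hf.deriv_ofScalars.hasSum_ofScalars (t := 1) (by simpa using hr)
  rw [← hasSum_nat_add_iff' 1]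
  simpa using h

theorem HasFPowerSeriesOnBall.hasSum_natCast_mul_sub_one_mul_ofScalars
    (hf : HasFPowerSeriesOnBall f (ofScalars ℝ c) 0 r) (hr : 1 < r) :
    HasSum (fun k : ℕ => k * (k - 1) * c k) (deriv (deriv f) 1) := by
  have h := hf.deriv_ofScalars.deriv_ofScalars.hasSum_ofScalars (t := 1) (by simpa using hr)
  have hshift : HasSum (fun k : ℕ => ((k + 2 : ℕ) : ℝ) * ((k + 2 : ℕ) - 1) * c (k + 2))
      (deriv (deriv f) 1) := h.congr_fun fun k => by push_cast; ring
  simpa [Finset.sum_range_succ] using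
    (hasSum_nat_add_iff (f := fun k : ℕ => (k : ℝ) * (k - 1) * c k) 2).mp hshift

theorem HasFPowerSeriesOnBall.hasSum_mul_sub_sq_ofScalars
    (hf : HasFPowerSeriesOnBall f (ofScalars ℝ c) 0 r) (hr : 1 < r) (u : ℝ) :
    HasSum (fun k : ℕ => c k * (k - u) ^ 2)
      (deriv (deriv f) 1 + (1 - 2 * u) * deriv f 1 + u ^ 2 * f 1) := by
  have h0 : HasSum c (f 1) := by simpa using hf.hasSum_ofScalars (t := 1) (by simpa using hr)
  have h1 := hf.hasSum_natCast_mul_ofScalars hr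
  have h2 := hf.hasSum_natCast_mul_sub_one_mul_ofScalars hr
  convert (h2.add (h1.mul_left (1 - 2 * u))).add (h0.mul_left (u ^ 2)) using 1
  funext k
  ring

end

section

variable {A H : ℝ → ℝ} {t : ℝ}

theorem hasDerivAt_mul_exp_mul {A' H' : ℝ} (u : ℝ) (hA : HasDerivAt A A' t)
    (hH : HasDerivAt H H' t) :
    HasDerivAt (fun s => A s * exp (u * H s)) ((A' + u * A t * H') * exp (u * H t)) t :=
  (hA.mul (hH.const_mul u).exp).congr_deriv (by ring)

theorem deriv_mul_exp_mul (u : ℝ) (hA : DifferentiableAt ℝ A t) (hH : DifferentiableAt ℝ H t) :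
    deriv (fun s => A s * exp (u * H s)) t
      = (deriv A t + u * A t * deriv H t) * exp (u * H t) :=
  (hasDerivAt_mul_exp_mul u hA.hasDerivAt hH.hasDerivAt).deriv

theorem deriv_deriv_mul_exp_mul (u : ℝ) (hA : AnalyticAt ℝ A t) (hH : AnalyticAt ℝ H t) :
    deriv (deriv fun s => A s * exp (u * H s)) t
      = (deriv (deriv A) t + u * (2 * deriv A t * deriv H t + A t * deriv (deriv H) t)
          + u ^ 2 * A t * deriv H t ^ 2) * exp (u * H t) := by
  have hderiv : deriv (fun s => A s * exp (u * H s))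
      =ᶠ[𝓝 t] fun s => (deriv A s + u * A s * deriv H s) * exp (u * H s) := by
    filter_upwards [hA.eventually_analyticAt, hH.eventually_analyticAt] with s hAs hHs
    exact deriv_mul_exp_mul u hAs.differentiableAt hHs.differentiableAt
  have hB : HasDerivAt (fun s => deriv A s + u * A s * deriv H s)
      (deriv (deriv A) t + (u * deriv A t * deriv H t + u * A t * deriv (deriv H) t)) t :=
    hA.deriv.differentiableAt.hasDerivAt.add
    ((hA.differentiableAt.hasDerivAt.const_mul u).mul hH.deriv.differentiableAt.hasDerivAt)
  rw [hderiv.deriv_eq, (hasDerivAt_mul_exp_mul u hB hH.differentiableAt.hasDerivAt).deriv]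
  ring

end

theorem sheffer_second_central_moment_general
    (R : ℝ) (hR : 1 < R)
    (A H : ℝ → ℝ) (a h : ℕ → ℝ)
    (hAser : ∀ t : ℝ, |t| < R → HasSum (fun k : ℕ => a k * t ^ k) (A t))
    (hHser : ∀ t : ℝ, |t| < R → HasSum (fun k : ℕ => h k * t ^ k) (H t))
    (p : ℕ → ℝ → ℝ)
    (hgen : ∀ x t : ℝ, |t| < R →
      HasSum (fun k : ℕ => p k x * t ^ k) (A t * Real.exp (x * H t)))
    (hA1 : A 1 ≠ 0) (hH1 : deriv H 1 = 1)
    (b : ℕ → ℝ) (hbpos : ∀ n, 0 < b n)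
    (n : ℕ) (hn : 1 ≤ n) (x : ℝ) :
    szaszSheffer A H p b n (fun t => (t - x) ^ 2) x
      = (b n / n) * (1 + deriv (deriv H) 1) * x
        + (b n / n) ^ 2 * ((deriv A 1 + deriv (deriv A) 1) / A 1) := by
  have hR0 : 0 < R := by linarith
  have h1R : 1 < ENNReal.ofReal R := by simpa using hR
  have hA := (hasFPowerSeriesOnBall_ofScalars_of_hasSum hR0 hAser).analyticAt_of_mem
    (y := 1) (by simpa using hR)
  have hH := (hasFPowerSeriesOnBall_ofScalars_of_hasSum hR0 hHser).analyticAt_of_mem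
    (y := 1) (by simpa using hR)
  have hn0 : (n : ℝ) ≠ 0 := Nat.cast_ne_zero.mpr (by omega)
  have hb0 : b n ≠ 0 := (hbpos n).ne'
  set u := (n : ℝ) / b n * x with hu
  have hx : x = b n / n * u := by rw [hu]; field_simp
  have hG := hasFPowerSeriesOnBall_ofScalars_of_hasSum hR0 (hgen u)
  have hmoment := (hG.hasSum_mul_sub_sq_ofScalars h1R u).mul_left ((b n / n) ^ 2)
  have hnodes (k : ℕ) :
      p k u * ((k : ℝ) / n * b n - x) ^ 2 = (b n / n) ^ 2 * (p k u * (k - u) ^ 2) := by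
    rw [hx]; field_simp
  have hexp : exp (-(n / b n) * x * H 1) = (exp (u * H 1))⁻¹ := by
    rw [← exp_neg, hu]; ring_nf
  rw [szaszSheffer, ← hu]
  simp only [hnodes, hmoment.tsum_eq, deriv_deriv_mul_exp_mul u hA hH,
    deriv_mul_exp_mul u hA.differentiableAt hH.differentiableAt, hH1, hexp]
  rw [hx]
  field_simp
  ring

theorem sheffer_second_central_moment
    (R : ℝ) (hR : 1 < R)
    (A H : ℝ → ℝ) (a h : ℕ → ℝ)
    (ha0 : a 0 ≠ 0) (hh1 : h 1 ≠ 0) (hh0 : h 0 = 0)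
    (hAser : ∀ t : ℝ, |t| < R → HasSum (fun k : ℕ => a k * t ^ k) (A t))
    (hHser : ∀ t : ℝ, |t| < R → HasSum (fun k : ℕ => h k * t ^ k) (H t))
    (p : ℕ → ℝ → ℝ)
    (hgen : ∀ x t : ℝ, |t| < R →
      HasSum (fun k : ℕ => p k x * t ^ k) (A t * Real.exp (x * H t)))
    (hp : ∀ (k : ℕ) (x : ℝ), 0 ≤ x → 0 ≤ p k x)
    (hA1 : A 1 ≠ 0) (hH1 : deriv H 1 = 1)
    (b : ℕ → ℝ) (hbpos : ∀ n, 0 < b n)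
    (hbtop : Tendsto b atTop atTop)
    (hbn : Tendsto (fun n : ℕ => b n / (n : ℝ)) atTop (nhds 0))
    (hA'0 : deriv A 1 = 0)
    (n : ℕ) (hn : 1 ≤ n) (x : ℝ) (hx : 0 ≤ x) :
    szaszSheffer A H p b n (fun t => (t - x) ^ 2) x
      = (b n / n) * (1 + deriv (deriv H) 1) * x
        + (b n / n) ^ 2 * ((deriv A 1 + deriv (deriv A) 1) / A 1) :=
  sheffer_second_central_moment_general R hR A H a h hAser hHser p hgen hA1 hH1 b hbpos n hn x
end

section
/- With T_n* as above (assuming A'(1) = 0 so T_n*((e_1−x)^2;x) = (b_n/n)(1+H''(1))x + (b_n/n)^2(A'(1)+A''(1))/A(1)), for every f uniformly continuous and bounded on [0,∞) and every x ∈ [0,a]: |T_n*(f;x) − f(x)| ≤ (1 + √((1+H''(1))a + (b_n/n)(A'(1)+A''(1))/A(1)))·ω(f, √(b_n/n)). -/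
/-!
Writing `u = n x / b_n` and `β = b_n / n`, the operator is `T_n^*(f; x) = ∑ w_k f(k β)` with weights
`w_k = e^{-u H(1)} p_k(u) / A(1) ≥ 0` that sum to `1` (the generating function at `t = 1`).
Differentiating `A(t) e^{u H(t)} = ∑ p_k(u) t^k` once and twice at `t = 1` gives `∑ k p_k(u)` and
`∑ k (k - 1) p_k(u)`, hence, when `A'(1) = 0` and `H'(1) = 1`, the second central moment
`∑ w_k (k β - x)² = β ((1 + H''(1)) x + β A''(1) / A(1))`.
For any positive operator reproducing constants, `|f(s) - f(x)| ≤ (1 + |s - x| / δ) ω(f, δ)`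
and Cauchy–Schwarz give `|L f - f(x)| ≤ (1 + √(L (e_1 - x)²) / δ) ω(f, δ)`; take `δ = √β`.
-/

open Real Filter Topology

/-- The modulus of continuity of `f` on `[0,∞)`. -/
noncomputable def modulus (f : ℝ → ℝ) (δ : ℝ) : ℝ :=
  sSup {y | ∃ s t : ℝ, 0 ≤ s ∧ 0 ≤ t ∧ |s - t| ≤ δ ∧ y = |f s - f t|}

section PowerSeries

variable {c : ℕ → ℝ} {g : ℝ → ℝ} {R : ℝ}

theorem summable_abs_mul_natCast_mul_pow_pred {r ρ : ℝ} (hc : Summable fun k => c k * ρ ^ k)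
    (hr : 0 < r) (hrρ : r < ρ) : Summable fun k => |c k| * (k * r ^ (k - 1)) := by
  have hρ : 0 < ρ := hr.trans hrρ
  obtain ⟨M, hM⟩ : ∃ M, ∀ k, |c k| * ρ ^ k ≤ M := by
    obtain ⟨M, hM⟩ := hc.abs.tendsto_atTop_zero.bddAbove_range
    exact ⟨M, fun k => by simpa [abs_mul, abs_of_pos (pow_pos hρ k)] using hM ⟨k, rfl⟩⟩
  have hq : ‖r / ρ‖ < 1 := by
    rw [Real.norm_eq_abs, abs_of_pos (by positivity), div_lt_one hρ]; exact hrρ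
  refine .of_nonneg_of_le (fun k => by positivity) (fun k => ?_)
    ((summable_pow_mul_geometric_of_norm_lt_one 1 hq).mul_left (M / r))
  cases k with
  | zero => simp
  | succ m =>
    have hcm : |c (m + 1)| ≤ M / ρ ^ (m + 1) := (le_div_iff₀ (by positivity)).2 (hM (m + 1))
    calc |c (m + 1)| * ((m + 1 : ℕ) * r ^ (m + 1 - 1))
        ≤ M / ρ ^ (m + 1) * ((m + 1 : ℕ) * r ^ m) := by simp only [Nat.add_sub_cancel]; gcongr
      _ = M / r * ((m + 1 : ℕ) ^ 1 * (r / ρ) ^ (m + 1)) := by rw [div_pow, pow_succ r]; field_simp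

theorem hasDerivAt_of_hasSum_pow (hc : ∀ t, |t| < R → HasSum (fun k => c k * t ^ k) (g t))
    {t : ℝ} (ht : |t| < R) :
    HasDerivAt g (∑' k, c k * (k * t ^ (k - 1))) t ∧
      Summable fun k => c k * (k * t ^ (k - 1)) := by
  obtain ⟨r, htr, hrR⟩ := exists_between ht
  obtain ⟨ρ, hrρ, hρR⟩ := exists_between hrR
  have hr : 0 < r := (abs_nonneg t).trans_lt htr
  have hbound : ∀ k, ∀ y ∈ Metric.ball (0 : ℝ) r,
      ‖c k * (k * y ^ (k - 1))‖ ≤ |c k| * (k * r ^ (k - 1)) := by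
    intro k y hy
    rw [mem_ball_zero_iff, Real.norm_eq_abs] at hy
    rw [Real.norm_eq_abs, abs_mul, abs_mul, Nat.abs_cast, abs_pow]
    gcongr
  have hu := summable_abs_mul_natCast_mul_pow_pred
    (hc ρ (by rwa [abs_of_pos (hr.trans hrρ)])).summable hr hrρ
  have ht' : t ∈ Metric.ball (0 : ℝ) r := by rwa [mem_ball_zero_iff, Real.norm_eq_abs]
  refine ⟨?_, .of_norm_bounded hu fun k => hbound k t ht'⟩
  have hg : g =ᶠ[𝓝 t] fun z => ∑' k, c k * z ^ k := by
    filter_upwards [Metric.isOpen_ball.mem_nhds (show t ∈ Metric.ball (0 : ℝ) R by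
      rwa [mem_ball_zero_iff, Real.norm_eq_abs])] with z hz
    rw [mem_ball_zero_iff, Real.norm_eq_abs] at hz
    exact (hc z hz).tsum_eq.symm
  refine HasDerivAt.congr_of_eventuallyEq ?_ hg
  exact hasDerivAt_tsum_of_isPreconnected hu Metric.isOpen_ball (convex_ball _ _).isPreconnected
    (fun k y _ => (hasDerivAt_pow k y).const_mul (c k)) hbound ht' (hc t ht).summable ht'

theorem eventually_differentiableAt_of_hasSum_pow
    (hc : ∀ t, |t| < R → HasSum (fun k => c k * t ^ k) (g t)) {t : ℝ} (ht : |t| < R) :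
    ∀ᶠ s in 𝓝 t, DifferentiableAt ℝ g s := by
  filter_upwards [(isOpen_lt continuous_abs continuous_const).mem_nhds ht] with s hs
  exact (hasDerivAt_of_hasSum_pow hc hs).1.differentiableAt

theorem hasSum_deriv_of_hasSum_pow (hc : ∀ t, |t| < R → HasSum (fun k => c k * t ^ k) (g t))
    {t : ℝ} (ht : |t| < R) :
    HasSum (fun k : ℕ => ((k : ℝ) + 1) * c (k + 1) * t ^ k) (deriv g t) := by
  obtain ⟨hd, hs⟩ := hasDerivAt_of_hasSum_pow hc ht
  have h := (hasSum_nat_add_iff' 1).2 hs.hasSum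
  simp only [Finset.sum_range_one, Nat.cast_zero, zero_mul, mul_zero, sub_zero, Nat.cast_add,
    Nat.cast_one, Nat.add_sub_cancel] at h
  rw [hd.deriv]
  simpa only [mul_comm, mul_left_comm] using h

theorem differentiableAt_deriv_of_hasSum_pow
    (hc : ∀ t, |t| < R → HasSum (fun k => c k * t ^ k) (g t)) {t : ℝ} (ht : |t| < R) :
    DifferentiableAt ℝ (deriv g) t :=
  (hasDerivAt_of_hasSum_pow (fun _ hs => hasSum_deriv_of_hasSum_pow hc hs) ht).1.differentiableAt

theorem hasSum_natCast_mul_of_hasSum_pow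
    (hc : ∀ t, |t| < R → HasSum (fun k => c k * t ^ k) (g t)) (hR : 1 < R) :
    HasSum (fun k : ℕ => (k : ℝ) * c k) (deriv g 1) := by
  have h := hasSum_deriv_of_hasSum_pow hc (t := 1) (by rwa [abs_one])
  rw [← hasSum_nat_add_iff' 1]
  simpa using h

theorem hasSum_natCast_sq_mul_of_hasSum_pow
    (hc : ∀ t, |t| < R → HasSum (fun k => c k * t ^ k) (g t)) (hR : 1 < R) :
    HasSum (fun k : ℕ => (k : ℝ) ^ 2 * c k) (deriv (deriv g) 1 + deriv g 1) := by
  have hderiv := hasSum_natCast_mul_of_hasSum_pow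
    (fun _ hs => hasSum_deriv_of_hasSum_pow hc hs) hR
  have hfactorial : HasSum (fun k : ℕ => (k : ℝ) * ((k : ℝ) - 1) * c k) (deriv (deriv g) 1) := by
    rw [← hasSum_nat_add_iff' 1]
    simp only [Finset.sum_range_one, Nat.cast_zero, zero_mul, sub_zero, Nat.cast_add,
      Nat.cast_one, add_sub_cancel_right]
    simpa only [mul_comm, mul_left_comm] using hderiv
  convert hfactorial.add (hasSum_natCast_mul_of_hasSum_pow hc hR) using 1
  ext k; ring

end PowerSeries

section Modulus

variable {f : ℝ → ℝ} {M : ℝ}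

theorem abs_sub_le_modulus (hM : ∀ t, |f t| ≤ M) {s t δ : ℝ} (hs : 0 ≤ s) (ht : 0 ≤ t)
    (hst : |s - t| ≤ δ) : |f s - f t| ≤ modulus f δ := by
  refine le_csSup ⟨2 * M, ?_⟩ ⟨s, t, hs, ht, hst, rfl⟩
  rintro _ ⟨s', t', -, -, -, rfl⟩
  linarith [abs_sub (f s') (f t'), hM s', hM t']

theorem modulus_nonneg (hM : ∀ t, |f t| ≤ M) {δ : ℝ} (hδ : 0 ≤ δ) : 0 ≤ modulus f δ := by
  simpa using abs_sub_le_modulus hM le_rfl le_rfl (by simpa using hδ)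

theorem abs_sub_le_natCast_mul_modulus (hM : ∀ t, |f t| ≤ M) {δ : ℝ} (m : ℕ) {s t : ℝ}
    (hs : 0 ≤ s) (ht : 0 ≤ t) (hst : |s - t| ≤ m * δ) : |f s - f t| ≤ m * modulus f δ := by
  induction m generalizing s with
  | zero =>
    obtain rfl : s = t := by simpa [sub_eq_zero] using hst
    simp
  | succ m ih =>
    have hm : (0 : ℝ) < m + 1 := by positivity
    set v := (m * s + t) / (m + 1) with hv_def
    have hv : 0 ≤ v := by positivity
    have hsv : |s - v| ≤ δ := by
      rw [show s - v = (s - t) / (m + 1) by rw [hv_def]; field_simp; ring, abs_div, abs_of_pos hm,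
        div_le_iff₀ hm]
      push_cast at hst; linarith
    have hvt : |v - t| ≤ m * δ := by
      rw [show v - t = m * (s - t) / (m + 1) by rw [hv_def]; field_simp; ring, abs_div,
        abs_of_pos hm, div_le_iff₀ hm, abs_mul, Nat.abs_cast]
      push_cast at hst
      nlinarith [m.cast_nonneg (α := ℝ)]
    calc |f s - f t| ≤ |f s - f v| + |f v - f t| := abs_sub_le _ _ _
      _ ≤ modulus f δ + m * modulus f δ := add_le_add (abs_sub_le_modulus hM hs hv hsv) (ih hv hvt)
      _ = (m + 1 : ℕ) * modulus f δ := by push_cast; ring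

theorem abs_sub_le_one_add_div_mul_modulus (hM : ∀ t, |f t| ≤ M) {δ : ℝ} (hδ : 0 < δ) {s t : ℝ}
    (hs : 0 ≤ s) (ht : 0 ≤ t) : |f s - f t| ≤ (1 + |s - t| / δ) * modulus f δ := by
  calc |f s - f t| ≤ ⌈|s - t| / δ⌉₊ * modulus f δ :=
        abs_sub_le_natCast_mul_modulus hM _ hs ht ((div_le_iff₀ hδ).1 (Nat.le_ceil _))
    _ ≤ (1 + |s - t| / δ) * modulus f δ := by
        gcongr
        · exact modulus_nonneg hM hδ.le
        · linarith [Nat.ceil_lt_add_one (by positivity : 0 ≤ |s - t| / δ)]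

end Modulus

section ProbabilityWeights

variable {w : ℕ → ℝ}

theorem summable_mul_abs_of_summable_mul_sq {d : ℕ → ℝ} (hw : ∀ k, 0 ≤ w k) (hw1 : Summable w)
    (hd : Summable fun k => w k * d k ^ 2) : Summable fun k => w k * |d k| := by
  refine .of_nonneg_of_le (fun k => mul_nonneg (hw k) (abs_nonneg _)) (fun k => ?_) (hw1.add hd)
  nlinarith [hw k, sq_nonneg (|d k| - 1), sq_abs (d k)]

theorem tsum_mul_abs_le_sqrt {d : ℕ → ℝ} {S : ℝ} (hw : ∀ k, 0 ≤ w k) (hw1 : HasSum w 1)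
    (hS : HasSum (fun k => w k * d k ^ 2) S) : ∑' k, w k * |d k| ≤ Real.sqrt S := by
  set T := ∑' k, w k * |d k| with hT
  have hd := summable_mul_abs_of_summable_mul_sq hw hw1.summable hS.summable
  -- `0 ≤ ∑ w (|d| - T)² = S - T²`
  have hvar := (hS.sub (hd.hasSum.mul_left (2 * T))).add (hw1.mul_left (T ^ 2))
  rw [← hT] at hvar
  have hexp : (fun k => w k * d k ^ 2 - 2 * T * (w k * |d k|) + T ^ 2 * w k) =
      fun k => w k * (|d k| - T) ^ 2 := by
    ext k; rw [← sq_abs (d k)]; ring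
  rw [hexp] at hvar
  have := hasSum_le (fun k => mul_nonneg (hw k) (sq_nonneg _)) hasSum_zero hvar
  exact (le_abs_self T).trans (Real.abs_le_sqrt (by nlinarith))

theorem abs_tsum_mul_sub_le_modulus {f : ℝ → ℝ} {M : ℝ} (hM : ∀ t, |f t| ≤ M) {y : ℕ → ℝ}
    {x S δ : ℝ} (hw : ∀ k, 0 ≤ w k) (hw1 : HasSum w 1) (hy : ∀ k, 0 ≤ y k) (hx : 0 ≤ x)
    (hS : HasSum (fun k => w k * (y k - x) ^ 2) S) (hδ : 0 < δ) :
    |∑' k, w k * f (y k) - f x| ≤ (1 + Real.sqrt S / δ) * modulus f δ := by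
  set ω := modulus f δ
  have hω : 0 ≤ ω := modulus_nonneg hM hδ.le
  have hd := summable_mul_abs_of_summable_mul_sq hw hw1.summable hS.summable
  have hbound : ∀ k, |w k * (f (y k) - f x)| ≤ ω * w k + ω / δ * (w k * |y k - x|) := by
    intro k
    rw [abs_mul, abs_of_nonneg (hw k)]
    calc w k * |f (y k) - f x| ≤ w k * ((1 + |y k - x| / δ) * ω) :=
          mul_le_mul_of_nonneg_left (abs_sub_le_one_add_div_mul_modulus hM hδ (hy k) hx) (hw k)
      _ = ω * w k + ω / δ * (w k * |y k - x|) := by ring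
  have hmaj : Summable fun k => ω * w k + ω / δ * (w k * |y k - x|) :=
    (hw1.summable.mul_left ω).add (hd.mul_left (ω / δ))
  have habs : Summable fun k => |w k * (f (y k) - f x)| :=
    .of_nonneg_of_le (fun k => abs_nonneg _) hbound hmaj
  have hsplit : ∑' k, w k * f (y k) - f x = ∑' k, w k * (f (y k) - f x) := by
    have := (summable_abs_iff.1 habs).hasSum.add (hw1.mul_right (f x))
    simp only [← mul_add, sub_add_cancel, one_mul] at this
    rw [this.tsum_eq, add_sub_cancel_right]
  calc |∑' k, w k * f (y k) - f x| = ‖∑' k, w k * (f (y k) - f x)‖ := by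
        rw [hsplit, Real.norm_eq_abs]
    _ ≤ ∑' k, ‖w k * (f (y k) - f x)‖ := norm_tsum_le_tsum_norm (by simpa only [Real.norm_eq_abs])
    _ = ∑' k, |w k * (f (y k) - f x)| := by simp only [Real.norm_eq_abs]
    _ ≤ ∑' k, (ω * w k + ω / δ * (w k * |y k - x|)) := habs.tsum_le_tsum hbound hmaj
    _ = ω + ω / δ * ∑' k, w k * |y k - x| := by
        rw [(hw1.summable.mul_left ω).tsum_add (hd.mul_left (ω / δ)), tsum_mul_left,
          tsum_mul_left, hw1.tsum_eq, mul_one]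
    _ ≤ ω + ω / δ * Real.sqrt S := by gcongr; exact tsum_mul_abs_le_sqrt hw hw1 hS
    _ = (1 + Real.sqrt S / δ) * ω := by ring

end ProbabilityWeights

theorem deriv_mul_exp_comp {A H : ℝ → ℝ} {t : ℝ} (u : ℝ) (hA : DifferentiableAt ℝ A t)
    (hH : DifferentiableAt ℝ H t) :
    deriv (fun s => A s * Real.exp (u * H s)) t =
      (deriv A t + A t * (u * deriv H t)) * Real.exp (u * H t) := by
  have h : HasDerivAt (fun s => A s * Real.exp (u * H s)) _ t :=
    hA.hasDerivAt.mul (hH.hasDerivAt.const_mul u).exp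
  rw [h.deriv]
  ring

theorem deriv_deriv_mul_exp_comp {A H : ℝ → ℝ} {t : ℝ} (u : ℝ)
    (hA : ∀ᶠ s in 𝓝 t, DifferentiableAt ℝ A s) (hH : ∀ᶠ s in 𝓝 t, DifferentiableAt ℝ H s)
    (hA' : DifferentiableAt ℝ (deriv A) t) (hH' : DifferentiableAt ℝ (deriv H) t) :
    deriv (deriv fun s => A s * Real.exp (u * H s)) t =
      (deriv (deriv A) t + 2 * deriv A t * (u * deriv H t)
        + A t * ((u * deriv H t) ^ 2 + u * deriv (deriv H) t)) * Real.exp (u * H t) := by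
  have hderiv : deriv (fun s => A s * Real.exp (u * H s)) =ᶠ[𝓝 t]
      fun s => (deriv A s + A s * (u * deriv H s)) * Real.exp (u * H s) := by
    filter_upwards [hA, hH] with s hAs hHs using deriv_mul_exp_comp u hAs hHs
  have h : HasDerivAt (fun s => (deriv A s + A s * (u * deriv H s)) * Real.exp (u * H s)) _ t :=
    (hA'.hasDerivAt.add (hA.self_of_nhds.hasDerivAt.mul (hH'.hasDerivAt.const_mul u))).mul
      (hH.self_of_nhds.hasDerivAt.const_mul u).exp
  rw [hderiv.deriv_eq, h.deriv, Pi.add_apply, Pi.mul_apply]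
  ring

section Sheffer

variable {R : ℝ} {A H : ℝ → ℝ} {p : ℕ → ℝ → ℝ}

noncomputable def shefferWeight (A H : ℝ → ℝ) (p : ℕ → ℝ → ℝ) (u : ℝ) (k : ℕ) : ℝ :=
  Real.exp (-(u * H 1)) / A 1 * p k u

theorem szaszSheffer_eq_tsum (b : ℕ → ℝ) (n : ℕ) (f : ℝ → ℝ) (x : ℝ) :
    szaszSheffer A H p b n f x =
      ∑' k, shefferWeight A H p (n / b n * x) k * f (k * (b n / n)) := by
  simp only [szaszSheffer, shefferWeight, ← tsum_mul_left]
  congr 1 with k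
  ring_nf

theorem shefferWeight_nonneg (hA1 : 0 < A 1) (hp : ∀ k x, 0 ≤ x → 0 ≤ p k x) {u : ℝ}
    (hu : 0 ≤ u) (k : ℕ) : 0 ≤ shefferWeight A H p u k :=
  mul_nonneg (by positivity) (hp k u hu)

theorem hasSum_sheffer_at_one (hR : 1 < R)
    (hgen : ∀ x t : ℝ, |t| < R → HasSum (fun k => p k x * t ^ k) (A t * Real.exp (x * H t)))
    (u : ℝ) : HasSum (fun k => p k u) (A 1 * Real.exp (u * H 1)) := by
  simpa using hgen u 1 (by rwa [abs_one])

theorem hasSum_shefferWeight (hR : 1 < R)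
    (hgen : ∀ x t : ℝ, |t| < R → HasSum (fun k => p k x * t ^ k) (A t * Real.exp (x * H t)))
    (hA1 : A 1 ≠ 0) (u : ℝ) : HasSum (shefferWeight A H p u) 1 := by
  have h : HasSum (shefferWeight A H p u) _ :=
    (hasSum_sheffer_at_one hR hgen u).mul_left (Real.exp (-(u * H 1)) / A 1)
  convert h using 1
  rw [Real.exp_neg]
  field_simp

theorem hasSum_shefferWeight_mul_sq (hR : 1 < R)
    (hgen : ∀ x t : ℝ, |t| < R → HasSum (fun k => p k x * t ^ k) (A t * Real.exp (x * H t)))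
    (hA1 : A 1 ≠ 0)
    (hA : ∀ᶠ s in 𝓝 1, DifferentiableAt ℝ A s) (hH : ∀ᶠ s in 𝓝 1, DifferentiableAt ℝ H s)
    (hA' : DifferentiableAt ℝ (deriv A) 1) (hH' : DifferentiableAt ℝ (deriv H) 1)
    (hA'1 : deriv A 1 = 0) (hH'1 : deriv H 1 = 1) (u β : ℝ) :
    HasSum (fun k => shefferWeight A H p u k * (k * β - β * u) ^ 2)
      (β * ((1 + deriv (deriv H) 1) * (β * u) + β * (deriv (deriv A) 1 / A 1))) := by
  have h0 := hasSum_sheffer_at_one hR hgen u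
  have h1 := hasSum_natCast_mul_of_hasSum_pow (g := fun t => A t * Real.exp (u * H t))
    (hgen u) hR
  have h2 := hasSum_natCast_sq_mul_of_hasSum_pow (g := fun t => A t * Real.exp (u * H t))
    (hgen u) hR
  rw [deriv_deriv_mul_exp_comp u hA hH hA' hH'] at h2
  rw [deriv_mul_exp_comp u hA.self_of_nhds hH.self_of_nhds, hA'1, hH'1] at h1 h2
  have h : HasSum (fun k : ℕ => Real.exp (-(u * H 1)) / A 1 *
      (β ^ 2 * (k ^ 2 * p k u) - 2 * β ^ 2 * u * (k * p k u) + (β * u) ^ 2 * p k u)) _ :=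
    (((h2.mul_left (β ^ 2)).sub (h1.mul_left (2 * β ^ 2 * u))).add
      (h0.mul_left ((β * u) ^ 2))).mul_left (Real.exp (-(u * H 1)) / A 1)
  convert h using 1
  · ext k; simp only [shefferWeight]; ring
  · rw [Real.exp_neg]; field_simp; ring

end Sheffer

theorem nonneg_of_forall_nonneg_mul_add {a b : ℝ} (h : ∀ u, 0 ≤ u → 0 ≤ a * u + b) : 0 ≤ a := by
  by_contra! ha
  have hu := h ((|b| + 1) / -a) (div_nonneg (by positivity) (by linarith))
  rw [show a * ((|b| + 1) / -a) = -(|b| + 1) by field_simp [ha.ne]] at hu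
  linarith [le_abs_self b]

theorem sheffer_modulus_estimate_general
    (R : ℝ) (hR : 1 < R)
    (A H : ℝ → ℝ) (a h : ℕ → ℝ)
    (hAser : ∀ t : ℝ, |t| < R → HasSum (fun k : ℕ => a k * t ^ k) (A t))
    (hHser : ∀ t : ℝ, |t| < R → HasSum (fun k : ℕ => h k * t ^ k) (H t))
    (p : ℕ → ℝ → ℝ)
    (hgen : ∀ x t : ℝ, |t| < R →
      HasSum (fun k : ℕ => p k x * t ^ k) (A t * Real.exp (x * H t)))
    (hp : ∀ (k : ℕ) (x : ℝ), 0 ≤ x → 0 ≤ p k x)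
    (hA1 : A 1 ≠ 0) (hH1 : deriv H 1 = 1)
    (b : ℕ → ℝ) (hbpos : ∀ n, 0 < b n)
    (hA'0 : deriv A 1 = 0)
    (f : ℝ → ℝ) (hfb : ∃ M, ∀ t : ℝ, |f t| ≤ M)
    (c : ℝ)
    (n : ℕ) (hn : 1 ≤ n) (x : ℝ) (hx : x ∈ Set.Icc (0 : ℝ) c) :
    |szaszSheffer A H p b n f x - f x|
      ≤ (1 + Real.sqrt ((1 + deriv (deriv H) 1) * c
            + (b n / n) * ((deriv A 1 + deriv (deriv A) 1) / A 1)))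
          * modulus f (Real.sqrt (b n / n)) := by
  obtain ⟨M, hM⟩ := hfb
  have h1R : |(1 : ℝ)| < R := by rwa [abs_one]
  have hA1pos : 0 < A 1 := (hasSum_le (fun k => hp k 0 le_rfl) hasSum_zero
    (by simpa using hasSum_sheffer_at_one hR hgen 0)).lt_of_ne' hA1
  have hvar := hasSum_shefferWeight_mul_sq hR hgen hA1
    (eventually_differentiableAt_of_hasSum_pow hAser h1R)
    (eventually_differentiableAt_of_hasSum_pow hHser h1R)
    (differentiableAt_deriv_of_hasSum_pow hAser h1R)
    (differentiableAt_deriv_of_hasSum_pow hHser h1R) hA'0 hH1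
  -- the second central moment `(1 + H''(1)) u + A''(1) / A(1)` (at `β = 1`) is `≥ 0` for `u ≥ 0`
  have hH2 : 0 ≤ 1 + deriv (deriv H) 1 := nonneg_of_forall_nonneg_mul_add fun u hu => by
    simpa using hasSum_le (fun k => mul_nonneg (shefferWeight_nonneg hA1pos hp hu k)
      (sq_nonneg _)) hasSum_zero (hvar u 1)
  set β := b n / n with hβ_def
  have hβ : 0 < β := div_pos (hbpos n) (by exact_mod_cast hn)
  have hu : 0 ≤ n / b n * x := mul_nonneg (div_nonneg n.cast_nonneg (hbpos n).le) hx.1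
  have hβu : β * (n / b n * x) = x := by rw [hβ_def]; field_simp [(hbpos n).ne']
  have hvarx := hvar (n / b n * x) β
  rw [hβu] at hvarx
  rw [szaszSheffer_eq_tsum]
  refine (abs_tsum_mul_sub_le_modulus hM (shefferWeight_nonneg hA1pos hp hu)
    (hasSum_shefferWeight hR hgen hA1 _) (fun k => by positivity) hx.1 hvarx
    (Real.sqrt_pos.2 hβ)).trans (mul_le_mul_of_nonneg_right ?_ (modulus_nonneg hM (by positivity)))
  rw [Real.sqrt_mul hβ.le, mul_div_cancel_left₀ _ (Real.sqrt_pos.2 hβ).ne', hA'0, zero_add]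
  gcongr
  exact hx.2

theorem sheffer_modulus_estimate
    (R : ℝ) (hR : 1 < R)
    (A H : ℝ → ℝ) (a h : ℕ → ℝ)
    (ha0 : a 0 ≠ 0) (hh1 : h 1 ≠ 0) (hh0 : h 0 = 0)
    (hAser : ∀ t : ℝ, |t| < R → HasSum (fun k : ℕ => a k * t ^ k) (A t))
    (hHser : ∀ t : ℝ, |t| < R → HasSum (fun k : ℕ => h k * t ^ k) (H t))
    (p : ℕ → ℝ → ℝ)
    (hgen : ∀ x t : ℝ, |t| < R →
      HasSum (fun k : ℕ => p k x * t ^ k) (A t * Real.exp (x * H t)))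
    (hp : ∀ (k : ℕ) (x : ℝ), 0 ≤ x → 0 ≤ p k x)
    (hA1 : A 1 ≠ 0) (hH1 : deriv H 1 = 1)
    (b : ℕ → ℝ) (hbpos : ∀ n, 0 < b n)
    (hbtop : Tendsto b atTop atTop)
    (hbn : Tendsto (fun n : ℕ => b n / (n : ℝ)) atTop (nhds 0))
    (hA'0 : deriv A 1 = 0)
    (f : ℝ → ℝ) (hfc : UniformContinuous f) (hfb : ∃ M, ∀ t : ℝ, |f t| ≤ M)
    (c : ℝ) (hc : 0 < c)
    (n : ℕ) (hn : 1 ≤ n) (x : ℝ) (hx : x ∈ Set.Icc (0 : ℝ) c) :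
    |szaszSheffer A H p b n f x - f x|
      ≤ (1 + Real.sqrt ((1 + deriv (deriv H) 1) * c
            + (b n / n) * ((deriv A 1 + deriv (deriv A) 1) / A 1)))
          * modulus f (Real.sqrt (b n / n)) :=
  sheffer_modulus_estimate_general R hR A H a h hAser hHser p hgen hp hA1 hH1 b hbpos hA'0 f hfb c n
    hn x hx
end
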